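/- arXiv:1511.07952 — 2 statements merged into one kernel-verified Lean document; each statement's English description precedes it below -/
import Mathlib

section
/- Fix ε₀ > 0 and ε ≥ 1, and set a_Ω = 1 + (ε − 1)χ_Ω for measurable Ω ⊂ ℝ³. Let Ω_n, Ω be measurable subsets of a fixed ball B_R with χ_{Ω_n} → χ_Ω in L¹(ℝ³), let v_n, v have weak gradients with ∇v_n ⇀ ∇v weakly in L²(ℝ³;ℝ³), and let ρ_n, ρ ∈ L²(ℝ³) with ρ_n ⇀ ρ weakly in L²(ℝ³). If for every n the distributional equation −ε₀ div(a_{Ω_n} ∇v_n) = ρ_n holds (i.e., ε₀ ∫ a_{Ω_n} ∇v_n · ∇φ dx = ∫ ρ_n φ dx for all φ ∈ C_c^∞(ℝ³)), then the limit satisfies −ε₀ div(a_Ω ∇v) = ρ in the same distributional sense. -/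
open MeasureTheory Metric Filter
open scoped ENNReal Real

set_option maxHeartbeats 1000000

noncomputable section

abbrev E3 := EuclideanSpace ℝ (Fin 3)

/-- The divergence of a vector field on ℝ³. -/
def divg (φ : E3 → E3) (x : E3) : ℝ :=
  ∑ i, fderiv ℝ φ x (EuclideanSpace.single i 1) i

/-- De Giorgi perimeter. -/
def perimeter (Ω : Set E3) : ℝ≥0∞ :=
  ⨆ (φ : E3 → E3) (_ : ContDiff ℝ 1 φ) (_ : HasCompactSupport φ)
    (_ : ∀ x, ‖φ x‖ ≤ 1), ENNReal.ofReal (∫ x in Ω, divg φ x)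

/-- Coulomb self-energy of a measure. -/
def coulombEnergy (ε₀ : ℝ) (μ : Measure E3) : ℝ≥0∞ :=
  ∫⁻ x, ∫⁻ y, ENNReal.ofReal (1 / (4 * Real.pi * ε₀ * dist x y)) ∂μ ∂μ

/-- Inverse capacitance. -/
def invCapacitance (ε₀ : ℝ) (Ω : Set E3) : ℝ≥0∞ :=
  ⨅ (μ : Measure E3) (_ : IsProbabilityMeasure μ) (_ : μ Ωᶜ = 0),
    coulombEnergy ε₀ μ

/-- The energy E(Ω) = σ P(Ω) + Q²/(2 C(Ω)). -/
def energyE (σ ε₀ Q : ℝ) (Ω : Set E3) : ℝ≥0∞ :=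
  ENNReal.ofReal σ * perimeter Ω + ENNReal.ofReal (Q ^ 2 / 2) * invCapacitance ε₀ Ω


/-- The dielectric coefficient `a_Ω = 1 + (ε − 1)χ_Ω`. -/
def aFun (ε : ℝ) (Ω : Set E3) (x : E3) : ℝ :=
  1 + (ε - 1) * Set.indicator Ω (fun _ => (1 : ℝ)) x

/-- The characteristic function of a set contained in a ball has compact support. -/
lemma chi_hcs {S : Set E3} {R : ℝ} (hsub : S ⊆ Metric.closedBall 0 R) :
    HasCompactSupport (Set.indicator S fun _ => (1 : ℝ)) := by
  apply HasCompactSupport.intro (isCompact_closedBall (0 : E3) R)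
  intro x hx
  exact Set.indicator_of_notMem (fun h => hx (hsub h)) _

lemma chi_memLp {S : Set E3} {R : ℝ} (hS : MeasurableSet S)
    (hsub : S ⊆ Metric.closedBall 0 R) (p : ℝ≥0∞) :
    MemLp (Set.indicator S fun _ => (1 : ℝ)) p volume := by
  refine (chi_hcs hsub).memLp_of_bound
    ((measurable_const.indicator hS).aestronglyMeasurable) 1 ?_
  filter_upwards with x
  by_cases h : x ∈ S <;> simp [Set.indicator_of_mem, Set.indicator_of_notMem, h]

/-- Stability of the distributional Poisson equation
`−ε₀ div(a_Ω ∇v) = ρ` under `L¹` convergence of `χ_{Ω_n}` and weak `L²` convergence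
of `∇v_n` and `ρ_n`. -/
theorem poisson_equation_stable_under_weak_convergence (ε₀ ε R : ℝ)
    (hε₀ : 0 < ε₀) (hε : 1 ≤ ε)
    (Ωn : ℕ → Set E3) (Ω : Set E3)
    (hmeasn : ∀ n, MeasurableSet (Ωn n)) (hmeas : MeasurableSet Ω)
    (hsubn : ∀ n, Ωn n ⊆ Metric.closedBall 0 R)
    (hsub : Ω ⊆ Metric.closedBall 0 R)
    (gn : ℕ → E3 → E3) (g : E3 → E3) (ρn : ℕ → E3 → ℝ) (ρ : E3 → ℝ)
    (hgnL2 : ∀ n, MemLp (gn n) 2 volume) (hgL2 : MemLp g 2 volume)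
    (hρnL2 : ∀ n, MemLp (ρn n) 2 volume) (hρL2 : MemLp ρ 2 volume)
    (hL1 : Tendsto
      (fun n => ∫ x, |Set.indicator (Ωn n) (fun _ => (1 : ℝ)) x -
        Set.indicator Ω (fun _ => (1 : ℝ)) x|) atTop (nhds 0))
    (hgweak : ∀ h : E3 → E3, MemLp h 2 volume →
      Tendsto (fun n => ∫ x, (inner ℝ (gn n x) (h x) : ℝ)) atTop
        (nhds (∫ x, (inner ℝ (g x) (h x) : ℝ))))
    (hρweak : ∀ h : E3 → ℝ, MemLp h 2 volume →
      Tendsto (fun n => ∫ x, ρn n x * h x) atTop (nhds (∫ x, ρ x * h x)))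
    (hpoisson : ∀ n, ∀ φ : E3 → ℝ, ContDiff ℝ (⊤ : ℕ∞) φ → HasCompactSupport φ →
      ε₀ * ∫ x, aFun ε (Ωn n) x * (inner ℝ (gn n x) (gradient φ x) : ℝ) =
        ∫ x, ρn n x * φ x) :
    ∀ φ : E3 → ℝ, ContDiff ℝ (⊤ : ℕ∞) φ → HasCompactSupport φ →
      ε₀ * ∫ x, aFun ε Ω x * (inner ℝ (g x) (gradient φ x) : ℝ) =
        ∫ x, ρ x * φ x := by
  intro φ hφ hφc
  set ψ : E3 → E3 := gradient φ with hψdef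
  -- basic properties of ψ
  have hψcont : Continuous ψ := by
    exact (InnerProductSpace.toDual ℝ E3).symm.continuous.comp
      (hφ.continuous_fderiv (by simp))
  have hψc : HasCompactSupport ψ := by
    have h1 : HasCompactSupport (fderiv ℝ φ) := hφc.fderiv (𝕜 := ℝ)
    exact h1.comp_left (g := (InnerProductSpace.toDual ℝ E3).symm) (by simp)
  obtain ⟨M, hM⟩ := hψc.exists_bound_of_continuous hψcont
  -- properties of aFun
  have haFun_meas : ∀ (S : Set E3), MeasurableSet S → Measurable (aFun ε S) := by
    intro S hS
    exact measurable_const.add ((measurable_const.indicator hS).const_mul (ε - 1))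
  have habs : ∀ (S : Set E3) (x : E3), |aFun ε S x| ≤ ε := by
    intro S x
    have hval : aFun ε S x = ε ∨ aFun ε S x = 1 := by
      by_cases h : x ∈ S
      · left; simp [aFun, Set.indicator_of_mem h]
      · right; simp [aFun, Set.indicator_of_notMem h]
    rcases hval with h | h <;> rw [h, abs_of_nonneg (by linarith)] <;> linarith
  have hAψ : ∀ (S : Set E3), MeasurableSet S →
      MemLp (fun x => aFun ε S x • ψ x) 2 volume := by
    intro S hS
    refine HasCompactSupport.memLp_of_bound (hψc.smul_left (f := aFun ε S))
      (((haFun_meas S hS).aestronglyMeasurable).smul hψcont.aestronglyMeasurable)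
      (ε * M) ?_
    filter_upwards with x
    rw [norm_smul]
    exact mul_le_mul (habs S x) (hM x) (norm_nonneg _) (le_trans zero_le_one hε)
  have hφmem : MemLp φ 2 volume := hφ.continuous.memLp_of_hasCompactSupport hφc
  -- Lp setup
  let Gn : ℕ → Lp E3 2 (volume : Measure E3) := fun n => (hgnL2 n).toLp (gn n)
  have hinner : ∀ (n : ℕ) (h : Lp E3 2 (volume : Measure E3)),
      (inner ℝ (Gn n) h : ℝ) = ∫ x, (inner ℝ (gn n x) (h x) : ℝ) := by
    intro n h
    rw [MeasureTheory.L2.inner_def]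
    refine integral_congr_ae ?_
    filter_upwards [(hgnL2 n).coeFn_toLp] with x hx
    rw [hx]
  -- uniform bound on ‖Gn n‖ via Banach–Steinhaus
  obtain ⟨C, hC⟩ : ∃ C, ∀ n, ‖innerSL ℝ (Gn n)‖ ≤ C := by
    apply banach_steinhaus
    intro h
    have ht := (hgweak h (Lp.memLp h)).norm
    have ht2 : Tendsto (fun n => ‖(innerSL ℝ (Gn n)) h‖) atTop
        (nhds ‖∫ x, (inner ℝ (g x) (h x) : ℝ)‖) := by
      have heq : (fun n => ‖(innerSL ℝ (Gn n)) h‖) =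
          fun n => ‖∫ x, (inner ℝ (gn n x) (h x) : ℝ)‖ := by
        funext n
        rw [innerSL_apply_apply, hinner]
      rw [heq]
      exact ht
    obtain ⟨D, hD⟩ := ht2.bddAbove_range
    exact ⟨D, fun n => hD (Set.mem_range_self n)⟩
  have hGn_norm : ∀ n, ‖Gn n‖ ≤ C := by
    intro n
    rw [← innerSL_apply_norm (𝕜 := ℝ)]
    exact hC n
  -- the functions a_{Ωn} ψ and a_Ω ψ in L²
  let Hn : ℕ → Lp E3 2 (volume : Measure E3) :=
    fun n => (hAψ (Ωn n) (hmeasn n)).toLp _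
  let Hl : Lp E3 2 (volume : Measure E3) := (hAψ Ω hmeas).toLp _
  -- pointwise facts on the indicator difference
  set dn : ℕ → E3 → ℝ := fun n x =>
    Set.indicator (Ωn n) (fun _ => (1 : ℝ)) x - Set.indicator Ω (fun _ => (1 : ℝ)) x
    with hdndef
  have hdn_int : ∀ n, Integrable (dn n) volume := by
    intro n
    exact (memLp_one_iff_integrable.mp
      (((chi_memLp (hmeasn n) (hsubn n) 1)).sub (chi_memLp hmeas hsub 1)))
  have hdn_sq : ∀ n x, |dn n x| ^ 2 = |dn n x| := by
    intro n x
    by_cases h1 : x ∈ Ωn n <;> by_cases h2 : x ∈ Ω <;>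
      simp [hdndef, Set.indicator_of_mem, Set.indicator_of_notMem, h1, h2]
  have haFun_diff : ∀ n x, aFun ε (Ωn n) x - aFun ε Ω x = (ε - 1) * dn n x := by
    intro n x
    simp only [aFun, hdndef]
    ring
  -- ‖Hn n − Hl‖ → 0
  have hHnorm_sq : ∀ n, ‖Hn n - Hl‖ ^ 2 ≤ ((ε - 1) * M) ^ 2 * ∫ x, |dn n x| := by
    intro n
    have hd : MemLp (fun x => (aFun ε (Ωn n) x - aFun ε Ω x) • ψ x) 2 volume := by
      have := (hAψ (Ωn n) (hmeasn n)).sub (hAψ Ω hmeas)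
      simpa [sub_smul, Pi.sub_def] using this
    have hcoe : (Hn n - Hl : Lp E3 2 (volume : Measure E3)) =ᵐ[volume]
        fun x => (aFun ε (Ωn n) x - aFun ε Ω x) • ψ x := by
      filter_upwards [Lp.coeFn_sub (Hn n) Hl, (hAψ (Ωn n) (hmeasn n)).coeFn_toLp,
        (hAψ Ω hmeas).coeFn_toLp] with x h1 h2 h3
      rw [h1]
      simp only [Pi.sub_apply]
      rw [h2, h3, sub_smul]
    have hns : ‖Hn n - Hl‖ ^ 2 =
        ∫ x, ‖(aFun ε (Ωn n) x - aFun ε Ω x) • ψ x‖ ^ 2 := by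
      rw [← real_inner_self_eq_norm_sq, MeasureTheory.L2.inner_def]
      refine integral_congr_ae ?_
      filter_upwards [hcoe] with x hx
      rw [hx, real_inner_self_eq_norm_sq]
    rw [hns]
    have hint1 : Integrable
        (fun x => ‖(aFun ε (Ωn n) x - aFun ε Ω x) • ψ x‖ ^ 2) volume :=
      hd.norm.integrable_sq
    have hint2 : Integrable (fun x => ((ε - 1) * M) ^ 2 * |dn n x|) volume :=
      ((hdn_int n).abs).const_mul _
    have hle : ∀ x, ‖(aFun ε (Ωn n) x - aFun ε Ω x) • ψ x‖ ^ 2 ≤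
        ((ε - 1) * M) ^ 2 * |dn n x| := by
      intro x
      rw [norm_smul, haFun_diff n x]
      have h1 : ‖(ε - 1) * dn n x‖ * ‖ψ x‖ ≤ ((ε - 1) * |dn n x|) * M := by
        rw [Real.norm_eq_abs, abs_mul, abs_of_nonneg (by linarith : (0:ℝ) ≤ ε - 1)]
        exact mul_le_mul_of_nonneg_left (hM x)
          (mul_nonneg (by linarith) (abs_nonneg _))
      calc (‖(ε - 1) * dn n x‖ * ‖ψ x‖) ^ 2
          ≤ (((ε - 1) * |dn n x|) * M) ^ 2 := by
            apply pow_le_pow_left₀ (mul_nonneg (norm_nonneg _) (norm_nonneg _)) h1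
        _ = ((ε - 1) * M) ^ 2 * |dn n x| ^ 2 := by ring
        _ ≤ ((ε - 1) * M) ^ 2 * |dn n x| := by rw [hdn_sq n x]
    calc (∫ x, ‖(aFun ε (Ωn n) x - aFun ε Ω x) • ψ x‖ ^ 2)
        ≤ ∫ x, ((ε - 1) * M) ^ 2 * |dn n x| := integral_mono hint1 hint2 hle
      _ = ((ε - 1) * M) ^ 2 * ∫ x, |dn n x| := integral_const_mul _ _
  have hsq0 : Tendsto (fun n => ‖Hn n - Hl‖ ^ 2) atTop (nhds 0) := by
    refine squeeze_zero (fun n => sq_nonneg _) hHnorm_sq ?_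
    have h0 := Tendsto.const_mul (((ε - 1) * M) ^ 2) hL1
    rw [mul_zero] at h0
    exact h0
  have hnorm0 : Tendsto (fun n => ‖Hn n - Hl‖) atTop (nhds 0) := by
    have h1 := (Real.continuous_sqrt.tendsto 0).comp hsq0
    rw [Real.sqrt_zero] at h1
    have h2 : ((fun x => Real.sqrt x) ∘ fun n => ‖Hn n - Hl‖ ^ 2) =
        fun n => ‖Hn n - Hl‖ := funext fun n => Real.sqrt_sq (norm_nonneg _)
    rwa [h2] at h1
  -- convergence of the main term
  have hGnHl : ∀ n, (inner ℝ (Gn n) Hl : ℝ) =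
      ∫ x, (inner ℝ (gn n x) (aFun ε Ω x • ψ x) : ℝ) := by
    intro n
    rw [MeasureTheory.L2.inner_def]
    refine integral_congr_ae ?_
    filter_upwards [(hgnL2 n).coeFn_toLp, (hAψ Ω hmeas).coeFn_toLp] with x hx hy
    rw [hx, hy]
  have hterm1 : Tendsto (fun n => (inner ℝ (Gn n) Hl : ℝ)) atTop
      (nhds (∫ x, (inner ℝ (g x) (aFun ε Ω x • ψ x) : ℝ))) := by
    have h0 := hgweak (fun x => aFun ε Ω x • ψ x) (hAψ Ω hmeas)
    have heq : (fun n => (inner ℝ (Gn n) Hl : ℝ)) =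
        fun n => ∫ x, (inner ℝ (gn n x) (aFun ε Ω x • ψ x) : ℝ) := funext hGnHl
    rw [heq]
    exact h0
  have hterm2 : Tendsto (fun n => (inner ℝ (Gn n) (Hn n - Hl) : ℝ)) atTop (nhds 0) := by
    refine squeeze_zero_norm (a := fun n => C * ‖Hn n - Hl‖) (fun n => ?_) ?_
    swap
    · have h0 := Tendsto.const_mul C hnorm0
      rw [mul_zero] at h0
      exact h0
    calc ‖(inner ℝ (Gn n) (Hn n - Hl) : ℝ)‖ ≤ ‖Gn n‖ * ‖Hn n - Hl‖ :=
        norm_inner_le_norm _ _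
      _ ≤ C * ‖Hn n - Hl‖ :=
        mul_le_mul_of_nonneg_right (hGn_norm n) (norm_nonneg _)
  have hmain : Tendsto (fun n => (inner ℝ (Gn n) (Hn n) : ℝ)) atTop
      (nhds (∫ x, (inner ℝ (g x) (aFun ε Ω x • ψ x) : ℝ))) := by
    have := hterm1.add hterm2
    simp only [add_zero] at this
    convert this using 2 with n
    rw [inner_sub_right]
    ring
  -- rewrite the main term as the integrals in the statement
  have hAn : ∀ n, (inner ℝ (Gn n) (Hn n) : ℝ) =
      ∫ x, aFun ε (Ωn n) x * (inner ℝ (gn n x) (ψ x) : ℝ) := by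
    intro n
    rw [MeasureTheory.L2.inner_def]
    refine integral_congr_ae ?_
    filter_upwards [(hgnL2 n).coeFn_toLp, (hAψ (Ωn n) (hmeasn n)).coeFn_toLp]
      with x hx hy
    rw [hx, hy, real_inner_smul_right]
  have htarget : (∫ x, (inner ℝ (g x) (aFun ε Ω x • ψ x) : ℝ)) =
      ∫ x, aFun ε Ω x * (inner ℝ (g x) (ψ x) : ℝ) := by
    refine integral_congr_ae (Eventually.of_forall fun x => ?_)
    simp only [real_inner_smul_right]
  have hmain' : Tendsto (fun n => ∫ x, aFun ε (Ωn n) x * (inner ℝ (gn n x) (ψ x) : ℝ))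
      atTop (nhds (∫ x, aFun ε Ω x * (inner ℝ (g x) (ψ x) : ℝ))) := by
    rw [← htarget]
    have heq : (fun n => ∫ x, aFun ε (Ωn n) x * (inner ℝ (gn n x) (ψ x) : ℝ)) =
        fun n => (inner ℝ (Gn n) (Hn n) : ℝ) := funext fun n => (hAn n).symm
    rw [heq]
    exact hmain
  -- conclude via uniqueness of limits
  have h1 : Tendsto (fun n => ε₀ * ∫ x, aFun ε (Ωn n) x * (inner ℝ (gn n x) (ψ x) : ℝ))
      atTop (nhds (ε₀ * ∫ x, aFun ε Ω x * (inner ℝ (g x) (ψ x) : ℝ))) :=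
    Tendsto.const_mul ε₀ hmain'
  have h2 : (fun n => ε₀ * ∫ x, aFun ε (Ωn n) x * (inner ℝ (gn n x) (ψ x) : ℝ)) =
      fun n => ∫ x, ρn n x * φ x := funext fun n => hpoisson n φ hφ hφc
  rw [h2] at h1
  exact tendsto_nhds_unique h1 (hρweak φ hφmem)

end
end

section
/- There exists a universal constant K > 0 with the following property. Let 0 < r ≤ ℓ/2, let C_{r,ℓ} ⊂ ℝ³ be a solid circular cylinder of radius r and height ℓ, let q > 0, and let μ be the measure with constant density q/|C_{r,ℓ}| on C_{r,ℓ} (so μ(C_{r,ℓ}) = q). Then the Coulomb self-energy satisfies ∫∫ 1/(4π ε₀ |x − y|) dμ(x) dμ(y) ≤ K (q²/(ε₀ ℓ)) (1 + log(ℓ/r)). -/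
/-! Layer cake: for every point `x`, `∫_C dy / |x - y| = ∫₀^∞ |C ∩ B(x, 1/t)| dt`. The measure
`|C ∩ B(x, s)|` is at most `|C| ≤ 4 r² ℓ`, at most `8 r² s` (the set lies in a `2r × 2r × 2s` box
around the axis) and at most `8 s³`; using these three bounds for `t ≤ 1/ℓ`, `1/ℓ < t ≤ 1/r` and
`t > 1/r` bounds the potential by `8 r² (1 + log (ℓ / r))`, uniformly in `x`. Integrating once
more against the density `q / (π r² ℓ)` gives the estimate with `K = 8 / π³`. Isometries preserve
volume and distances, so the cylinder may be taken standard. -/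

open MeasureTheory Metric Filter
open scoped ENNReal Real

noncomputable section

/-- The standard solid circular cylinder of radius `r` and height `ℓ` in `ℝ³`. -/
def stdCylinder (r ℓ : ℝ) : Set E3 :=
  {x | x 0 ^ 2 + x 1 ^ 2 ≤ r ^ 2 ∧ 0 ≤ x 2 ∧ x 2 ≤ ℓ}

/-- A solid circular cylinder of radius `r` and height `ℓ`: an isometric copy of
the standard one. -/
def IsCylinder (r ℓ : ℝ) (C : Set E3) : Prop :=
  ∃ f : E3 ≃ᵢ E3, C = f '' stdCylinder r ℓ

open Set

theorem volume_euclideanSpace_setOf_forall_mem_Icc {ι : Type*} [Fintype ι] (a b : ι → ℝ) :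
    volume {y : EuclideanSpace ℝ ι | ∀ i, y i ∈ Icc (a i) (b i)} =
      ∏ i, ENNReal.ofReal (b i - a i) := by
  have : {y : EuclideanSpace ℝ ι | ∀ i, y i ∈ Icc (a i) (b i)} = WithLp.ofLp ⁻¹' Icc a b := by
    ext y; simp [Pi.le_def, forall_and]
  rw [this, (PiLp.volume_preserving_ofLp ι).measure_preimage measurableSet_Icc.nullMeasurableSet,
    Real.volume_Icc_pi]

theorem volume_le_of_forall_mem_Icc {S : Set E3} {a₀ b₀ a₁ b₁ a₂ b₂ : ℝ} (h₀ : a₀ ≤ b₀)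
    (h₁ : a₁ ≤ b₁)
    (hS : ∀ y ∈ S, y 0 ∈ Icc a₀ b₀ ∧ y 1 ∈ Icc a₁ b₁ ∧ y 2 ∈ Icc a₂ b₂) :
    volume S ≤ ENNReal.ofReal ((b₀ - a₀) * (b₁ - a₁) * (b₂ - a₂)) := by
  have hbox : S ⊆ {y | ∀ i, y i ∈ Icc (![a₀, a₁, a₂] i) (![b₀, b₁, b₂] i)} := by
    intro y hy i
    obtain ⟨hy₀, hy₁, hy₂⟩ := hS y hy
    fin_cases i <;> simp [hy₀, hy₁, hy₂]
  calc volume S ≤ _ := measure_mono hbox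
    _ = _ := by
      rw [volume_euclideanSpace_setOf_forall_mem_Icc, Fin.prod_univ_three,
        ← ENNReal.ofReal_mul (by simpa using h₀), ← ENNReal.ofReal_mul (by simp; nlinarith)]
      simp

theorem abs_apply_le_of_mem_stdCylinder {r ℓ : ℝ} (hr : 0 ≤ r) {x : E3}
    (hx : x ∈ stdCylinder r ℓ) : |x 0| ≤ r ∧ |x 1| ≤ r :=
  ⟨abs_le_of_sq_le_sq (by nlinarith [hx.1, sq_nonneg (x 1)]) hr,
    abs_le_of_sq_le_sq (by nlinarith [hx.1, sq_nonneg (x 0)]) hr⟩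

theorem volume_stdCylinder_le {r : ℝ} (ℓ : ℝ) (hr : 0 ≤ r) :
    volume (stdCylinder r ℓ) ≤ ENNReal.ofReal (4 * r ^ 2 * ℓ) := by
  convert volume_le_of_forall_mem_Icc (a₂ := 0) (b₂ := ℓ) (neg_le_self hr) (neg_le_self hr)
    fun y hy => ?_ using 2
  · ring
  · obtain ⟨h0, h1⟩ := abs_apply_le_of_mem_stdCylinder hr hy
    exact ⟨abs_le.1 h0, abs_le.1 h1, hy.2⟩

theorem volume_closedBall_inter_stdCylinder_le {r : ℝ} (ℓ : ℝ) (hr : 0 ≤ r) (z : E3) (s : ℝ) :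
    volume (closedBall z s ∩ stdCylinder r ℓ) ≤ ENNReal.ofReal (8 * r ^ 2 * s) := by
  convert volume_le_of_forall_mem_Icc (a₂ := z 2 - s) (b₂ := z 2 + s) (neg_le_self hr)
    (neg_le_self hr) fun y hy => ?_ using 2
  · ring
  · obtain ⟨h0, h1⟩ := abs_apply_le_of_mem_stdCylinder hr hy.2
    have h2 := (PiLp.dist_apply_le y z 2).trans (mem_closedBall.1 hy.1)
    rw [Real.dist_eq, abs_sub_le_iff] at h2
    exact ⟨abs_le.1 h0, abs_le.1 h1, by constructor <;> linarith⟩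

theorem volume_closedBall_le (x : E3) {s : ℝ} (hs : 0 ≤ s) :
    volume (closedBall x s) ≤ ENNReal.ofReal (8 * s ^ 3) := by
  have hx : ∀ i, x i - s ≤ x i + s := fun i => by linarith
  convert volume_le_of_forall_mem_Icc (a₂ := x 2 - s) (b₂ := x 2 + s) (hx 0) (hx 1)
    fun y hy => ?_ using 2
  · ring
  · have h : ∀ i, y i ∈ Icc (x i - s) (x i + s) := fun i => by
      have := (PiLp.dist_apply_le y x i).trans (mem_closedBall.1 hy)
      rw [Real.dist_eq, abs_sub_le_iff] at this
      constructor <;> linarith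
    exact ⟨h 0, h 1, h 2⟩

theorem lintegral_ofReal_one_div_dist_le {X : Type*} [PseudoMetricSpace X] [MeasurableSpace X]
    [OpensMeasurableSpace X] (μ : Measure X) (x : X) :
    ∫⁻ y, ENNReal.ofReal (1 / dist x y) ∂μ ≤ ∫⁻ t in Ioi 0, μ (closedBall x (1 / t)) := by
  rw [lintegral_eq_lintegral_meas_lt (f := fun y => 1 / dist x y) μ
    (.of_forall fun y => one_div_nonneg.2 dist_nonneg)
    (measurable_const.div (continuous_const.dist continuous_id).measurable).aemeasurable]
  refine setLIntegral_mono' measurableSet_Ioi fun t (ht : 0 < t) => measure_mono fun y hy => ?_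
  have hy : t < 1 / dist x y := hy
  have hd : 0 < dist x y := one_div_pos.1 (ht.trans hy)
  rw [mem_closedBall, dist_comm, le_div_iff₀ ht, mul_comm]
  exact (lt_div_iff₀ hd).1 hy |>.le

theorem lintegral_Ioc_ofReal_mul_inv {A a b : ℝ} (hA : 0 ≤ A) (ha : 0 < a) (hab : a ≤ b) :
    ∫⁻ t in Ioc a b, ENNReal.ofReal (A * t⁻¹) = ENNReal.ofReal (A * Real.log (b / a)) := by
  have hint : IntegrableOn (fun t : ℝ => A * t⁻¹) (Ioc a b) :=
    (continuousOn_const.mul (continuousOn_inv₀.mono fun t ht => (ha.trans_le ht.1).ne')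
      ).integrableOn_Icc.mono_set Ioc_subset_Icc_self
  rw [← ofReal_integral_eq_lintegral_ofReal hint, ← intervalIntegral.integral_of_le hab,
    intervalIntegral.integral_const_mul, integral_inv_of_pos ha (ha.trans_le hab)]
  exact (ae_restrict_iff' measurableSet_Ioc).2
    (.of_forall fun t ht => mul_nonneg hA (inv_nonneg.2 (ha.trans ht.1).le))

theorem lintegral_Ioi_ofReal_mul_rpow_neg_three {B b : ℝ} (hB : 0 ≤ B) (hb : 0 < b) :
    ∫⁻ t in Ioi b, ENNReal.ofReal (B * t ^ (-3 : ℝ)) = ENNReal.ofReal (B / (2 * b ^ 2)) := by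
  rw [← ofReal_integral_eq_lintegral_ofReal
    ((integrableOn_Ioi_rpow_of_lt (by norm_num) hb).const_mul B), integral_const_mul,
    integral_Ioi_rpow_of_lt (by norm_num) hb]
  · congr 1
    rw [show (-3 : ℝ) + 1 = -2 by norm_num, Real.rpow_neg hb.le, Real.rpow_two]
    field_simp
  · exact (ae_restrict_iff' measurableSet_Ioi).2
      (.of_forall fun t ht => mul_nonneg hB (Real.rpow_nonneg (hb.trans ht).le _))

theorem lintegral_ofReal_one_div_dist_le_of_measure_closedBall_le {X : Type*}
    [PseudoMetricSpace X] [MeasurableSpace X] [OpensMeasurableSpace X] {μ : Measure X} {x : X}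
    {V A B a b : ℝ} (hA : 0 ≤ A) (hB : 0 ≤ B) (ha : 0 < a) (hab : a ≤ b)
    (hV : μ univ ≤ ENNReal.ofReal V)
    (hlin : ∀ s > 0, μ (closedBall x s) ≤ ENNReal.ofReal (A * s))
    (hcub : ∀ s > 0, μ (closedBall x s) ≤ ENNReal.ofReal (B * s ^ 3)) :
    ∫⁻ y, ENNReal.ofReal (1 / dist x y) ∂μ ≤ ENNReal.ofReal (V * a) +
      ENNReal.ofReal (A * Real.log (b / a)) + ENNReal.ofReal (B / (2 * b ^ 2)) := by
  set G := fun t : ℝ => μ (closedBall x (1 / t))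
  have hG₁ : ∫⁻ t in Ioc 0 a, G t ≤ ENNReal.ofReal (V * a) :=
    calc ∫⁻ t in Ioc 0 a, G t ≤ ∫⁻ _ in Ioc 0 a, ENNReal.ofReal V :=
          lintegral_mono fun _ => (measure_mono (subset_univ _)).trans hV
      _ = ENNReal.ofReal (V * a) := by
          rw [setLIntegral_const, Real.volume_Ioc, sub_zero, ENNReal.ofReal_mul' ha.le]
  have hG₂ : ∫⁻ t in Ioc a b, G t ≤ ENNReal.ofReal (A * Real.log (b / a)) := by
    refine (setLIntegral_mono' measurableSet_Ioc fun t ht => ?_).trans_eq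
      (lintegral_Ioc_ofReal_mul_inv hA ha hab)
    simpa only [G, one_div] using hlin _ (one_div_pos.2 (ha.trans ht.1))
  have hG₃ : ∫⁻ t in Ioi b, G t ≤ ENNReal.ofReal (B / (2 * b ^ 2)) := by
    refine (setLIntegral_mono' measurableSet_Ioi fun t (ht : b < t) => ?_).trans_eq
      (lintegral_Ioi_ofReal_mul_rpow_neg_three hB (ha.trans_le hab))
    have ht₀ : 0 < t := ha.trans_le hab |>.trans ht
    rw [Real.rpow_neg ht₀.le, Real.rpow_ofNat, ← inv_pow, ← one_div]
    exact hcub _ (one_div_pos.2 ht₀)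
  calc ∫⁻ y, ENNReal.ofReal (1 / dist x y) ∂μ ≤ ∫⁻ t in Ioi 0, G t :=
        lintegral_ofReal_one_div_dist_le μ x
    _ = ∫⁻ t in Ioc 0 a ∪ (Ioc a b ∪ Ioi b), G t := by
        rw [Ioc_union_Ioi_eq_Ioi hab, Ioc_union_Ioi_eq_Ioi ha.le]
    _ ≤ (∫⁻ t in Ioc 0 a, G t) + ((∫⁻ t in Ioc a b, G t) + ∫⁻ t in Ioi b, G t) :=
        (lintegral_union_le _ _ _).trans (by gcongr; exact lintegral_union_le _ _ _)
    _ ≤ _ := by rw [← add_assoc]; gcongr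

theorem setLIntegral_stdCylinder_ofReal_one_div_dist_le {r ℓ : ℝ} (hr : 0 < r) (hrℓ : r ≤ ℓ)
    (x : E3) :
    ∫⁻ y in stdCylinder r ℓ, ENNReal.ofReal (1 / dist x y) ≤
      ENNReal.ofReal (8 * r ^ 2 * (1 + Real.log (ℓ / r))) := by
  have hℓ : 0 < ℓ := hr.trans_le hrℓ
  have hball : ∀ s, volume.restrict (stdCylinder r ℓ) (closedBall x s) =
      volume (closedBall x s ∩ stdCylinder r ℓ) := fun s =>
    Measure.restrict_apply measurableSet_closedBall
  refine (lintegral_ofReal_one_div_dist_le_of_measure_closedBall_le (V := 4 * r ^ 2 * ℓ)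
    (A := 8 * r ^ 2) (B := 8) (a := 1 / ℓ) (b := 1 / r) (by positivity) (by norm_num)
    (by positivity) (one_div_le_one_div_of_le hr hrℓ) ?_ ?_ ?_).trans_eq ?_
  · simpa only [Measure.restrict_apply_univ] using volume_stdCylinder_le ℓ hr.le
  · intro s _
    rw [hball]
    exact volume_closedBall_inter_stdCylinder_le ℓ hr.le x s
  · intro s hs
    rw [hball]
    exact (measure_mono inter_subset_left).trans (volume_closedBall_le x hs.le)
  · have hL : 0 ≤ Real.log (ℓ / r) := Real.log_nonneg ((one_le_div hr).2 hrℓ)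
    rw [show 1 / r / (1 / ℓ) = ℓ / r by field_simp, ← ENNReal.ofReal_add (by positivity)
      (by positivity), ← ENNReal.ofReal_add (by positivity) (by positivity)]
    congr 1
    field_simp
    ring

theorem coulombEnergy_smul (ε₀ : ℝ) {c : ℝ≥0∞} (hc : c ≠ ∞) (μ : Measure E3) :
    coulombEnergy ε₀ (c • μ) = c ^ 2 * coulombEnergy ε₀ μ := by
  simp only [coulombEnergy, lintegral_smul_measure, smul_eq_mul, lintegral_const_mul' _ _ hc]
  ring

theorem IsometryEquiv.measurePreserving_volume {n : ℕ}
    (f : EuclideanSpace ℝ (Fin n) ≃ᵢ EuclideanSpace ℝ (Fin n)) :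
    MeasurePreserving f := by
  simpa [EuclideanSpace.euclideanHausdorffMeasure_eq_volume] using
    f.measurePreserving_euclideanHausdorffMeasure n

theorem coulombEnergy_map_isometryEquiv (ε₀ : ℝ) (f : E3 ≃ᵢ E3) (μ : Measure E3) :
    coulombEnergy ε₀ (μ.map f) = coulombEnergy ε₀ μ := by
  have hf : MeasurableEmbedding f := f.toHomeomorph.measurableEmbedding
  simp only [coulombEnergy, hf.lintegral_map, f.dist_eq]

theorem coulombEnergy_restrict_image_isometryEquiv (ε₀ : ℝ) (f : E3 ≃ᵢ E3) (S : Set E3) :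
    coulombEnergy ε₀ (volume.restrict (f '' S)) = coulombEnergy ε₀ (volume.restrict S) := by
  rw [← (f.measurePreserving_volume.restrict_image_emb f.toHomeomorph.measurableEmbedding
    S).map_eq, coulombEnergy_map_isometryEquiv]

theorem coulombEnergy_le_of_lintegral_le (ε₀ : ℝ) (μ : Measure E3) {P : ℝ≥0∞}
    (hP : ∀ x, ∫⁻ y, ENNReal.ofReal (1 / dist x y) ∂μ ≤ P) :
    coulombEnergy ε₀ μ ≤ ENNReal.ofReal (1 / (4 * π * ε₀)) * P * μ univ := by
  have hsplit : ∀ x y : E3, ENNReal.ofReal (1 / (4 * π * ε₀ * dist x y)) =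
      ENNReal.ofReal (1 / (4 * π * ε₀)) * ENNReal.ofReal (1 / dist x y) := fun x y => by
    rw [← ENNReal.ofReal_mul' (one_div_nonneg.2 dist_nonneg), one_div_mul_one_div]
  calc coulombEnergy ε₀ μ
      = ∫⁻ x, ENNReal.ofReal (1 / (4 * π * ε₀)) * ∫⁻ y, ENNReal.ofReal (1 / dist x y) ∂μ ∂μ := by
        simp only [coulombEnergy, hsplit, lintegral_const_mul' _ _ ENNReal.ofReal_ne_top]
    _ ≤ ∫⁻ _, ENNReal.ofReal (1 / (4 * π * ε₀)) * P ∂μ :=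
        lintegral_mono fun x => by gcongr; exact hP x
    _ = _ := lintegral_const _

/-- There is a universal constant `K > 0` such that for every
`0 < r ≤ ℓ/2`, every solid circular cylinder `C` of radius `r` and height `ℓ`, and
every charge `q > 0`, the Coulomb self-energy of the uniform charge distribution of
total charge `q` on `C` (density `q/|C| = q/(πr²ℓ)`) is at most
`K (q²/(ε₀ ℓ))(1 + log(ℓ/r))`. -/
theorem cylinder_self_energy_bound :
    ∃ K : ℝ, 0 < K ∧ ∀ (ε₀ r ℓ q : ℝ), 0 < ε₀ → 0 < r → r ≤ ℓ / 2 → 0 < q →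
      ∀ C : Set E3, IsCylinder r ℓ C →
        (let μ : Measure E3 :=
          ENNReal.ofReal (q / (Real.pi * r ^ 2 * ℓ)) • volume.restrict C
        coulombEnergy ε₀ μ ≤
          ENNReal.ofReal (K * (q ^ 2 / (ε₀ * ℓ)) * (1 + Real.log (ℓ / r)))) := by
  refine ⟨8 / π ^ 3, by positivity, fun ε₀ r ℓ q hε₀ hr hrℓ hq C ⟨f, hC⟩ => ?_⟩
  have hℓ : 0 < ℓ := by linarith
  have hL : 0 ≤ Real.log (ℓ / r) := Real.log_nonneg ((one_le_div hr).2 (by linarith))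
  set S := stdCylinder r ℓ
  have hS : coulombEnergy ε₀ (volume.restrict S) ≤ ENNReal.ofReal (1 / (4 * π * ε₀)) *
      ENNReal.ofReal (8 * r ^ 2 * (1 + Real.log (ℓ / r))) * ENNReal.ofReal (4 * r ^ 2 * ℓ) :=
    (coulombEnergy_le_of_lintegral_le ε₀ _
      (setLIntegral_stdCylinder_ofReal_one_div_dist_le hr (by linarith))).trans
      (by rw [Measure.restrict_apply_univ]; gcongr; exact volume_stdCylinder_le ℓ hr.le)
  dsimp only
  rw [coulombEnergy_smul ε₀ ENNReal.ofReal_ne_top, hC, coulombEnergy_restrict_image_isometryEquiv]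
  refine (mul_le_mul_right hS _).trans_eq ?_
  rw [← ENNReal.ofReal_pow (by positivity), ← ENNReal.ofReal_mul (by positivity),
    ← ENNReal.ofReal_mul (by positivity), ← ENNReal.ofReal_mul (by positivity)]
  congr 1
  field_simp

end
end
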